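/- If S_i and S_j are two minimal uv-separators of a graph G with |S_i ∪ S_j| ≤ k, then there is a k-TAR reconfiguration sequence from S_i to S_j: one can first add the vertices of S_j \ S_i one at a time and then remove the vertices of S_i \ S_j one at a time, with every intermediate set a uv-separator of size at most k. -/

import Mathlib

/-! Every set `T` with `Si ⊆ T ⊆ Si ∪ Sj` or `Sj ⊆ T ⊆ Si ∪ Sj` is a `uv`-separator (a superset
of one, avoiding `u` and `v`) of size at most `|Si ∪ Sj| ≤ k`. Hence adding the vertices of
`Sj \ Si` to `Si` one at a time reaches `Si ∪ Sj`, and removing the vertices of `Si \ Sj` one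
at a time then reaches `Sj`, through admissible sets only. -/

/-- `S` is a `uv`-separator in `G`. -/
def IsSep {V : Type*} (G : SimpleGraph V) (u v : V) (S : Set V) : Prop :=
  u ∉ S ∧ v ∉ S ∧ ∀ p : G.Walk u v, ∃ w ∈ S, w ∈ p.support

/-- `S` is a minimal `uv`-separator in `G`. -/
def MinSep {V : Type*} (G : SimpleGraph V) (u v : V) (S : Set V) : Prop :=
  IsSep G u v S ∧ ∀ T ⊂ S, ¬ IsSep G u v T

open Relation

theorem IsSep.mono {V : Type*} {G : SimpleGraph V} {u v : V} {S T : Set V}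
    (hS : IsSep G u v S) (hST : S ⊆ T) (hu : u ∉ T) (hv : v ∉ T) : IsSep G u v T := by
  refine ⟨hu, hv, fun p => ?_⟩
  obtain ⟨w, hwS, hwp⟩ := hS.2.2 p
  exact ⟨w, hST hwS, hwp⟩

/-- One token-addition-removal move between sets satisfying `P`. -/
def TARStep {α : Type*} (P : Set α → Prop) (A B : Set α) : Prop :=
  P A ∧ P B ∧ (symmDiff A B).ncard = 1

namespace TARStep

variable {α : Type*} {P : Set α → Prop}

instance : Std.Symm (TARStep P) where
  symm A B h := ⟨h.2.1, h.1, symmDiff_comm A B ▸ h.2.2⟩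

theorem to_insert {s : Set α} {a : α} (ha : a ∉ s) (hs : P s) (has : P (insert a s)) :
    TARStep P s (insert a s) := by
  refine ⟨hs, has, ?_⟩
  rw [symmDiff_of_le (Set.subset_insert a s), Set.insert_sdiff_of_notMem _ ha, Set.sdiff_self,
    insert_empty_eq, Set.ncard_singleton]

theorem reflTransGen_of_subset {X Y : Set α} (hY : Y.Finite) (hXY : X ⊆ Y)
    (hP : ∀ T, X ⊆ T → T ⊆ Y → P T) : ReflTransGen (TARStep P) X Y := by
  refine (hY.induction_to (C := fun T => X ⊆ T ∧ ReflTransGen (TARStep P) X T)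
    X hXY ⟨le_rfl, .refl⟩ fun T hTY ⟨hXT, hT⟩ => ?_).2
  obtain ⟨a, haY, haT⟩ := Set.exists_of_ssubset hTY
  have hXaT : X ⊆ insert a T := hXT.trans (Set.subset_insert a T)
  refine ⟨a, ⟨haY, haT⟩, hXaT, hT.tail (to_insert haT (hP T hXT hTY.subset) ?_)⟩
  exact hP _ hXaT (Set.insert_subset haY hTY.subset)

end TARStep

theorem Relation.ReflTransGen.exists_seq {α : Type*} {r : α → α → Prop} {a b : α}
    (h : ReflTransGen r a b) :
    ∃ (n : ℕ) (f : ℕ → α), f 0 = a ∧ f n = b ∧ ∀ i < n, r (f i) (f (i + 1)) := by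
  induction h with
  | refl => exact ⟨0, fun _ => a, rfl, rfl, fun i hi => absurd hi (Nat.not_lt_zero i)⟩
  | @tail c d _ hcd ih =>
    obtain ⟨n, f, hf0, hfn, hf⟩ := ih
    refine ⟨n + 1, fun i => if i ≤ n then f i else d, by simp [hf0], by simp, fun i hi => ?_⟩
    rcases Nat.lt_succ_iff_lt_or_eq.mp hi with hi | rfl
    · simpa [hi.le, Nat.succ_le_of_lt hi] using hf i hi
    · simpa [hfn] using hcd

theorem stmt11_general {V : Type*} [Fintype V] (G : SimpleGraph V) (u v : V)
    (k : ℕ) (Si Sj : Set V)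
    (hSi : MinSep G u v Si) (hSj : MinSep G u v Sj)
    (hk : (Si ∪ Sj).ncard ≤ k) :
    ∃ (n : ℕ) (f : ℕ → Set V), f 0 = Si ∧ f n = Sj ∧
      (∀ i ≤ n, IsSep G u v (f i) ∧ (f i).ncard ≤ k) ∧
      (∀ i < n, (symmDiff (f i) (f (i + 1))).ncard = 1) := by
  set P : Set V → Prop := fun S => IsSep G u v S ∧ S.ncard ≤ k
  have hfin : (Si ∪ Sj).Finite := Set.toFinite _
  have hP : ∀ S, IsSep G u v S → ∀ T, S ⊆ T → T ⊆ Si ∪ Sj → P T := fun S hS T hST hT =>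
    ⟨hS.mono hST (fun h => (hT h).elim hSi.1.1 hSj.1.1) (fun h => (hT h).elim hSi.1.2.1 hSj.1.2.1),
      (Set.ncard_le_ncard hT hfin).trans hk⟩
  have hreach : ReflTransGen (TARStep P) Si Sj :=
    (TARStep.reflTransGen_of_subset hfin Set.subset_union_left (hP Si hSi.1)).trans
      (Std.Symm.symm _ _
        (TARStep.reflTransGen_of_subset hfin Set.subset_union_right (hP Sj hSj.1)))
  obtain ⟨n, f, hf0, hfn, hstep⟩ := hreach.exists_seq
  refine ⟨n, f, hf0, hfn, fun i hi => ?_, fun i hi => (hstep i hi).2.2⟩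
  rcases hi.lt_or_eq with hi | rfl
  · exact (hstep i hi).1
  · exact hfn ▸ hP Sj hSj.1 Sj le_rfl Set.subset_union_right

/-- If `Si, Sj` are minimal `uv`-separators with `|Si ∪ Sj| ≤ k`, then there
is a `k`-TAR reconfiguration sequence from `Si` to `Sj`. -/
theorem stmt11 {V : Type*} [Fintype V] (G : SimpleGraph V) (u v : V)
    (huv : ¬ G.Adj u v) (k : ℕ) (Si Sj : Set V)
    (hSi : MinSep G u v Si) (hSj : MinSep G u v Sj)
    (hk : (Si ∪ Sj).ncard ≤ k) :
    ∃ (n : ℕ) (f : ℕ → Set V), f 0 = Si ∧ f n = Sj ∧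
      (∀ i ≤ n, IsSep G u v (f i) ∧ (f i).ncard ≤ k) ∧
      (∀ i < n, (symmDiff (f i) (f (i + 1))).ncard = 1) :=
  stmt11_general G u v k Si Sj hSi hSj hk
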